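/- If R₁,…,R_k is a swap overlap order, then swapping each 'failing' pair yields an overlap order: there is a permutation σ of {1,…,k}, obtained by exchanging adjacent positions l, l+1 whenever R_l overlaps no earlier set, such that in the reordered sequence each set (after the first) overlaps some earlier set. -/

import Mathlib

def Overlaps {α : Type*} [DecidableEq α] (A B : Finset α) : Prop :=
  (A ∩ B).Nonempty ∧ (A \ B).Nonempty ∧ (B \ A).Nonempty

/-! Call position `n` *failing* if `R n` overlaps no earlier set. By the swap condition a failing
`n` has `n + 1 < k` and `R (n + 1)` overlaps some `R g` with `g < n`, so `n + 1` is not failing: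
failing positions are never adjacent. Hence the transpositions `(n n+1)`, `n` failing, are
disjoint, and their product is an involution moving each index by at most one. In the new order
`R n`, now at `n + 1`, overlaps `R (n + 1)` just before it, while every other set keeps its old
partner, since a set only jumps forward past its neighbour in a failing swap. -/

theorem Overlaps.symm {α : Type*} [DecidableEq α] {A B : Finset α} (h : Overlaps A B) :
    Overlaps B A :=
  ⟨Finset.inter_comm A B ▸ h.1, h.2.2, h.2.1⟩

section SwapOverlapOrder

variable {r : ℕ → ℕ → Prop} {k n : ℕ}

def IsOverlapOrder (r : ℕ → ℕ → Prop) (k : ℕ) : Prop :=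
  ∀ j, 0 < j → j < k → ∃ i < j, r i j

def IsSwapOverlapOrder (r : ℕ → ℕ → Prop) (k : ℕ) : Prop :=
  ∀ l, 1 ≤ l → l < k →
    (∃ g < l, r g l) ∨ (l + 1 < k ∧ (∃ g < l, r g (l + 1)) ∧ r l (l + 1))

def IsFailing (r : ℕ → ℕ → Prop) (k n : ℕ) : Prop :=
  1 ≤ n ∧ n < k ∧ ¬∃ g < n, r g n

theorem IsSwapOverlapOrder.of_isFailing (hr : IsSwapOverlapOrder r k) (hn : IsFailing r k n) :
    n + 1 < k ∧ (∃ g < n, r g (n + 1)) ∧ r n (n + 1) :=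
  (hr n hn.1 hn.2.1).resolve_left hn.2.2

theorem IsSwapOverlapOrder.not_isFailing_succ (hr : IsSwapOverlapOrder r k)
    (hn : IsFailing r k n) : ¬IsFailing r k (n + 1) := by
  obtain ⟨-, ⟨g, hg, hov⟩, -⟩ := hr.of_isFailing hn
  exact fun h => h.2.2 ⟨g, hg.trans n.lt_succ_self, hov⟩

open Classical in
noncomputable def swapFailing (r : ℕ → ℕ → Prop) (k n : ℕ) : ℕ :=
  if IsFailing r k n then n + 1 else if IsFailing r k (n - 1) then n - 1 else n

theorem swapFailing_of_isFailing (h : IsFailing r k n) : swapFailing r k n = n + 1 := by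
  simp [swapFailing, h]

theorem swapFailing_of_isFailing_pred (h : ¬IsFailing r k n) (h' : IsFailing r k (n - 1)) :
    swapFailing r k n = n - 1 := by
  simp [swapFailing, h, h']

theorem swapFailing_of_not_isFailing (h : ¬IsFailing r k n) (h' : ¬IsFailing r k (n - 1)) :
    swapFailing r k n = n := by
  simp [swapFailing, h, h']

theorem IsSwapOverlapOrder.swapFailing_involutive (hr : IsSwapOverlapOrder r k) :
    Function.Involutive (swapFailing r k) := by
  intro n
  by_cases h : IsFailing r k n
  · rw [swapFailing_of_isFailing h,
      swapFailing_of_isFailing_pred (hr.not_isFailing_succ h) (by simpa using h)]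
    rfl
  by_cases h' : IsFailing r k (n - 1)
  · have hn : 2 ≤ n := by have := h'.1; omega
    rw [swapFailing_of_isFailing_pred h h', swapFailing_of_isFailing h']
    omega
  · rw [swapFailing_of_not_isFailing h h', swapFailing_of_not_isFailing h h']

theorem IsSwapOverlapOrder.swapFailing_lt (hr : IsSwapOverlapOrder r k) (hn : n < k) :
    swapFailing r k n < k := by
  by_cases h : IsFailing r k n
  · rw [swapFailing_of_isFailing h]
    exact (hr.of_isFailing h).1
  by_cases h' : IsFailing r k (n - 1)
  · rw [swapFailing_of_isFailing_pred h h']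
    omega
  · rwa [swapFailing_of_not_isFailing h h']

theorem swapFailing_lt_of_lt {g j : ℕ} (hg : g < j) (h : ¬(IsFailing r k g ∧ g + 1 = j)) :
    swapFailing r k g < j := by
  by_cases hF : IsFailing r k g
  · rw [swapFailing_of_isFailing hF]
    have : g + 1 ≠ j := fun e => h ⟨hF, e⟩
    omega
  by_cases hF' : IsFailing r k (g - 1)
  · rw [swapFailing_of_isFailing_pred hF hF']
    omega
  · rwa [swapFailing_of_not_isFailing hF hF']

theorem IsSwapOverlapOrder.isOverlapOrder_swapFailing (hsymm : ∀ {a b}, r a b → r b a)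
    (hr : IsSwapOverlapOrder r k) :
    IsOverlapOrder (fun a b => r (swapFailing r k a) (swapFailing r k b)) k := by
  intro j hj hjk
  have hinv := hr.swapFailing_involutive
  -- an earlier partner `g` of the set now at position `j` sits at position `swapFailing r k g`
  have partner : ∀ g < j, ¬(IsFailing r k g ∧ g + 1 = j) → r g (swapFailing r k j) →
      ∃ i < j, r (swapFailing r k i) (swapFailing r k j) := fun g hg hgj hov =>
    ⟨swapFailing r k g, swapFailing_lt_of_lt hg hgj, by rwa [hinv g]⟩
  by_cases h : IsFailing r k j
  · obtain ⟨-, ⟨g, hg, hov⟩, -⟩ := hr.of_isFailing h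
    refine partner g hg (fun ⟨hFg, hgj⟩ => hr.not_isFailing_succ hFg (hgj ▸ h)) ?_
    rwa [swapFailing_of_isFailing h]
  by_cases h' : IsFailing r k (j - 1)
  · have hj1 : j - 1 + 1 = j := by omega
    refine ⟨j - 1, by omega, ?_⟩
    show r (swapFailing r k (j - 1)) (swapFailing r k j)
    rw [swapFailing_of_isFailing h', swapFailing_of_isFailing_pred h h', hj1]
    exact hsymm (hj1 ▸ (hr.of_isFailing h').2.2)
  · obtain ⟨g, hg, hov⟩ : ∃ g < j, r g j := by
      by_contra hc
      exact h ⟨hj, hjk, hc⟩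
    refine partner g hg (fun ⟨hFg, hgj⟩ => h' (by rwa [← hgj, Nat.add_sub_cancel])) ?_
    rwa [swapFailing_of_not_isFailing h h']

noncomputable def IsSwapOverlapOrder.swapFailingPerm (hr : IsSwapOverlapOrder r k) :
    Equiv.Perm (Fin k) :=
  Function.Involutive.toPerm (fun j => ⟨swapFailing r k j, hr.swapFailing_lt j.2⟩) fun j =>
    Fin.ext (hr.swapFailing_involutive j)

end SwapOverlapOrder

/-- From a swap overlap order one obtains, by exchanging the failing adjacent
pairs, a reordering in which each set (after the first) overlaps an earlier set. -/
theorem stmt16 {α : Type*} [DecidableEq α] (k : ℕ) (R : ℕ → Finset α)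
    (h : ∀ l, 1 ≤ l → l < k →
      (∃ g < l, Overlaps (R g) (R l)) ∨
      (l + 1 < k ∧ (∃ g < l, Overlaps (R g) (R (l + 1))) ∧
        Overlaps (R l) (R (l + 1)))) :
    ∃ σ : Equiv.Perm (Fin k), ∀ j : Fin k, 0 < (j : ℕ) →
      ∃ i : Fin k, i < j ∧ Overlaps (R (σ i)) (R (σ j)) := by
  have hr : IsSwapOverlapOrder (fun g l => Overlaps (R g) (R l)) k := h
  refine ⟨hr.swapFailingPerm, fun j hj => ?_⟩
  obtain ⟨i, hij, hov⟩ :=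
    hr.isOverlapOrder_swapFailing Overlaps.symm j hj j.2
  exact ⟨⟨i, hij.trans j.2⟩, hij, hov⟩
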